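/- arXiv:1807.05182 — 2 statements merged into one kernel-verified Lean document; each statement's English description precedes it below -/
import Mathlib

section
/- Let Σ be the 4N×4N block matrix Σ = [[I⊗I₂, −τ(D⊗J₂ᵀ)], [−τ(D³⊗J₂ᵀ), I⊗I₂]] with D diagonal, τ ∈ ℝ, and J₂ = [[0,1],[−1,0]]. Then Σ is invertible with Σ⁻¹ = [[D₁⊗I₂, τ(D₁D⊗J₂ᵀ)], [τ(D₁D³⊗J₂ᵀ), D₁⊗I₂]], where D₁ = (I + τ²D⁴)⁻¹. -/
open Matrix
open scoped Kronecker

/-!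
Since `J₂ᵀ * J₂ᵀ = -1`, products of off-diagonal blocks satisfy `(A ⊗ J₂ᵀ)(B ⊗ J₂ᵀ) = -(A B) ⊗ I₂`.
Hence in `Σ⁻¹ Σ` the off-diagonal blocks cancel and, as `D` commutes with `D³`, the diagonal ones
are `D₁ (I + τ² D⁴) ⊗ I₂ = I`. A one-sided inverse of a square matrix is
two-sided, and `I + τ² D⁴` is positive definite, so `D₁` is a genuine inverse.
-/

namespace Matrix

variable {n m R : Type*} [Fintype n] [Fintype m] [DecidableEq m] [CommRing R]

theorem kronecker_mul_kronecker_of_mul_self_eq_neg_one {K : Matrix m m R} (hK : K * K = -1)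
    (A B : Matrix n n R) : (A ⊗ₖ K) * (B ⊗ₖ K) = -((A * B) ⊗ₖ (1 : Matrix m m R)) := by
  rw [← mul_kronecker_mul, hK]
  ext ⟨i, a⟩ ⟨j, b⟩
  simp [kroneckerMap_apply]

variable [DecidableEq n]

def blockSigma (τ : R) (A B : Matrix n n R) (K : Matrix m m R) :
    Matrix ((n × m) ⊕ (n × m)) ((n × m) ⊕ (n × m)) R :=
  fromBlocks 1 (-(τ • (A ⊗ₖ K))) (-(τ • (B ⊗ₖ K))) 1

def blockSigmaInv (τ : R) (A B : Matrix n n R) (K : Matrix m m R) (E : Matrix n n R) :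
    Matrix ((n × m) ⊕ (n × m)) ((n × m) ⊕ (n × m)) R :=
  fromBlocks (E ⊗ₖ 1) (τ • ((E * A) ⊗ₖ K)) (τ • ((E * B) ⊗ₖ K)) (E ⊗ₖ 1)

variable {K : Matrix m m R} (hK : K * K = -1) (τ : R) {A B E : Matrix n n R}
  (hAB : Commute A B) (hE : E * (1 + τ ^ 2 • (A * B)) = 1)
include hK hAB hE

theorem blockSigmaInv_mul_blockSigma : blockSigmaInv τ A B K E * blockSigma τ A B K = 1 := by
  have hE_AB : E + (τ * τ) • (E * A * B) = 1 := by
    rw [← hE, mul_add, mul_one, mul_smul_comm, mul_assoc, sq]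
  have hE_BA : (τ * τ) • (E * B * A) + E = 1 := by
    rw [add_comm, mul_assoc, ← hAB.eq, ← mul_assoc, hE_AB]
  rw [blockSigmaInv, blockSigma, fromBlocks_multiply]
  simp only [Matrix.one_mul, Matrix.mul_one, Matrix.mul_neg, Matrix.smul_mul, Matrix.mul_smul,
    smul_smul, kronecker_mul_kronecker_of_mul_self_eq_neg_one hK, ← mul_kronecker_mul, neg_neg,
    neg_add_cancel, add_neg_cancel, ← smul_kronecker, ← add_kronecker, hE_AB, hE_BA,
    one_kronecker_one, fromBlocks_one]

theorem blockSigma_mul_blockSigmaInv : blockSigma τ A B K * blockSigmaInv τ A B K E = 1 :=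
  mul_eq_one_comm.mp (blockSigmaInv_mul_blockSigma hK τ hAB hE)

end Matrix

theorem Sigma_inverse_general (N : ℕ) (d : Fin N → ℝ) (τ : ℝ) :
    ∀ D : Matrix (Fin N) (Fin N) ℝ, D = Matrix.diagonal d →
    ∀ D₁ : Matrix (Fin N) (Fin N) ℝ, D₁ = (1 + τ^2 • D^4)⁻¹ →
    ∀ J₂ : Matrix (Fin 2) (Fin 2) ℝ, J₂ = !![(0:ℝ), 1; -1, 0] →
      (Matrix.fromBlocks
          (1 : Matrix (Fin N × Fin 2) (Fin N × Fin 2) ℝ) (-(τ • (D ⊗ₖ J₂ᵀ)))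
          (-(τ • ((D^3) ⊗ₖ J₂ᵀ))) 1)
        * (Matrix.fromBlocks
          (D₁ ⊗ₖ (1 : Matrix (Fin 2) (Fin 2) ℝ)) (τ • ((D₁ * D) ⊗ₖ J₂ᵀ))
          (τ • ((D₁ * D^3) ⊗ₖ J₂ᵀ)) (D₁ ⊗ₖ (1 : Matrix (Fin 2) (Fin 2) ℝ)))
        = 1
      ∧ (Matrix.fromBlocks
          (D₁ ⊗ₖ (1 : Matrix (Fin 2) (Fin 2) ℝ)) (τ • ((D₁ * D) ⊗ₖ J₂ᵀ))
          (τ • ((D₁ * D^3) ⊗ₖ J₂ᵀ)) (D₁ ⊗ₖ (1 : Matrix (Fin 2) (Fin 2) ℝ)))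
        * (Matrix.fromBlocks
          (1 : Matrix (Fin N × Fin 2) (Fin N × Fin 2) ℝ) (-(τ • (D ⊗ₖ J₂ᵀ)))
          (-(τ • ((D^3) ⊗ₖ J₂ᵀ))) 1)
        = 1 := by
  rintro D rfl D₁ rfl J₂ rfl
  have hK : (!![(0:ℝ), 1; -1, 0])ᵀ * (!![(0:ℝ), 1; -1, 0])ᵀ = -1 := by
    rw [← transpose_mul]
    simp [← Matrix.ext_iff]
  have hD4 : (diagonal d ^ 4).PosSemidef := by
    rw [diagonal_pow]
    exact posSemidef_diagonal_iff.mpr fun i => Even.pow_nonneg (by decide) (d i)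
  have hdet : IsUnit (1 + τ ^ 2 • diagonal d ^ 4).det :=
    (PosDef.one.add_posSemidef (hD4.smul (sq_nonneg τ))).det_pos.ne'.isUnit
  have hE := nonsing_inv_mul _ hdet
  rw [pow_succ' (diagonal d) 3] at hE ⊢
  exact ⟨blockSigma_mul_blockSigmaInv hK τ (Commute.self_pow _ 3) hE,
    blockSigmaInv_mul_blockSigma hK τ (Commute.self_pow _ 3) hE⟩

/-- the block matrix
`Σ = [[I⊗I₂, −τ(D⊗J₂ᵀ)], [−τ(D³⊗J₂ᵀ), I⊗I₂]]`, with `D` diagonal and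
`J₂ = [[0,1],[−1,0]]`, is invertible with
`Σ⁻¹ = [[D₁⊗I₂, τ(D₁D⊗J₂ᵀ)], [τ(D₁D³⊗J₂ᵀ), D₁⊗I₂]]`, `D₁ = (I+τ²D⁴)⁻¹`. -/
theorem Sigma_inverse (N : ℕ) (hN : 1 ≤ N) (d : Fin N → ℝ) (τ : ℝ) :
    ∀ D : Matrix (Fin N) (Fin N) ℝ, D = Matrix.diagonal d →
    ∀ D₁ : Matrix (Fin N) (Fin N) ℝ, D₁ = (1 + τ^2 • D^4)⁻¹ →
    ∀ J₂ : Matrix (Fin 2) (Fin 2) ℝ, J₂ = !![(0:ℝ), 1; -1, 0] →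
      (Matrix.fromBlocks
          (1 : Matrix (Fin N × Fin 2) (Fin N × Fin 2) ℝ) (-(τ • (D ⊗ₖ J₂ᵀ)))
          (-(τ • ((D^3) ⊗ₖ J₂ᵀ))) 1)
        * (Matrix.fromBlocks
          (D₁ ⊗ₖ (1 : Matrix (Fin 2) (Fin 2) ℝ)) (τ • ((D₁ * D) ⊗ₖ J₂ᵀ))
          (τ • ((D₁ * D^3) ⊗ₖ J₂ᵀ)) (D₁ ⊗ₖ (1 : Matrix (Fin 2) (Fin 2) ℝ)))
        = 1
      ∧ (Matrix.fromBlocks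
          (D₁ ⊗ₖ (1 : Matrix (Fin 2) (Fin 2) ℝ)) (τ • ((D₁ * D) ⊗ₖ J₂ᵀ))
          (τ • ((D₁ * D^3) ⊗ₖ J₂ᵀ)) (D₁ ⊗ₖ (1 : Matrix (Fin 2) (Fin 2) ℝ)))
        * (Matrix.fromBlocks
          (1 : Matrix (Fin N × Fin 2) (Fin N × Fin 2) ℝ) (-(τ • (D ⊗ₖ J₂ᵀ)))
          (-(τ • ((D^3) ⊗ₖ J₂ᵀ))) 1)
        = 1 :=
  Sigma_inverse_general N d τ
end

section
/- The traveling wave u(x,t) = 1/2 − A·sech²(√(A/6)·(x + ct − ξ₀)) with c² = 1 − (2/3)A is an exact solution of u_tt = −u_xxxx + (u²)_xx. -/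
/-!
Write the wave as `φ (k (x + c t - ξ₀))` with profile `φ = 1/2 - A sech²` and `k² = A/6`.
By the chain rule the equation becomes `k² (c² φ'' + k² φ'''' - (φ²)'') = 0`, i.e. the second
derivative of `c² φ - φ² + (A/6) φ''` must vanish. Since `sech²'' = 4 sech² - 6 sech⁴`, this
expression is in fact the constant `1/4 - A/3` once `c² = 1 - 2A/3`.
-/

open Real

theorem iteratedDeriv_comp_mul_add {𝕜 : Type*} [NontriviallyNormedField 𝕜] {n : ℕ} {f : 𝕜 → 𝕜}
    (hf : ContDiff 𝕜 n f) (a b x : 𝕜) :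
    iteratedDeriv n (fun x => f (a * x + b)) x = a ^ n * iteratedDeriv n f (a * x + b) := by
  have hfb : ContDiff 𝕜 n fun z => f (z + b) := hf.comp (contDiff_id.add contDiff_const)
  rw [iteratedDeriv_comp_const_mul hfb a, iteratedDeriv_comp_add_const]

theorem iteratedDeriv_iteratedDeriv {𝕜 F : Type*} [NontriviallyNormedField 𝕜]
    [NormedAddCommGroup F] [NormedSpace 𝕜 F] (m n : ℕ) (f : 𝕜 → F) :
    iteratedDeriv m (iteratedDeriv n f) = iteratedDeriv (m + n) f := by
  simp only [iteratedDeriv_eq_iterate, Function.iterate_add_apply]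

theorem contDiff_sech_sq {n : WithTop ℕ∞} : ContDiff ℝ n fun z => (1 / cosh z) ^ 2 :=
  (contDiff_const.div contDiff_cosh fun z => (cosh_pos z).ne').pow 2

theorem hasDerivAt_sech_sq (z : ℝ) :
    HasDerivAt (fun z => (1 / cosh z) ^ 2) (-2 * sinh z / cosh z ^ 3) z := by
  have hz := (cosh_pos z).ne'
  refine (((hasDerivAt_const z (1 : ℝ)).div (hasDerivAt_cosh z) hz).pow 2).congr_deriv ?_
  simp only [Pi.div_apply]
  norm_num
  field_simp

theorem hasDerivAt_sinh_div_cosh_pow_three (z : ℝ) :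
    HasDerivAt (fun z => sinh z / cosh z ^ 3)
      (-2 * (1 / cosh z) ^ 2 + 3 * ((1 / cosh z) ^ 2) ^ 2) z := by
  have hz := (cosh_pos z).ne'
  refine ((hasDerivAt_sinh z).div ((hasDerivAt_cosh z).pow 3) (pow_ne_zero 3 hz)).congr_deriv ?_
  simp only [Pi.pow_apply]
  field_simp
  linear_combination (-3 * cosh z ^ 2) * sinh_sq z

theorem iteratedDeriv_two_sech_sq :
    iteratedDeriv 2 (fun z => (1 / cosh z) ^ 2) =
      fun z => 4 * (1 / cosh z) ^ 2 - 6 * ((1 / cosh z) ^ 2) ^ 2 := by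
  have h_deriv : deriv (fun z => (1 / cosh z) ^ 2) = fun z => -2 * (sinh z / cosh z ^ 3) := by
    funext z
    rw [(hasDerivAt_sech_sq z).deriv]
    ring
  funext z
  have h := hasDerivAt_sinh_div_cosh_pow_three z
  rw [iteratedDeriv_succ, iteratedDeriv_one, h_deriv, deriv_const_mul _ h.differentiableAt,
    h.deriv]
  ring

noncomputable def solitonProfile (A z : ℝ) : ℝ := 1 / 2 - A * (1 / cosh z) ^ 2

theorem contDiff_solitonProfile {n : WithTop ℕ∞} (A : ℝ) : ContDiff ℝ n (solitonProfile A) :=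
  contDiff_const.sub (contDiff_const.mul contDiff_sech_sq)

theorem iteratedDeriv_two_solitonProfile (A : ℝ) :
    iteratedDeriv 2 (solitonProfile A) =
      fun z => -A * (4 * (1 / cosh z) ^ 2 - 6 * ((1 / cosh z) ^ 2) ^ 2) := by
  funext z
  have h_eq : solitonProfile A = fun z => 1 / 2 - A * (1 / cosh z) ^ 2 := rfl
  rw [h_eq, iteratedDeriv_const_sub two_pos, iteratedDeriv_neg, iteratedDeriv_const_mul_field,
    iteratedDeriv_two_sech_sq]
  ring

theorem solitonProfile_first_integral (A z : ℝ) :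
    (1 - 2 / 3 * A) * solitonProfile A z - solitonProfile A z ^ 2
      + A / 6 * iteratedDeriv 2 (solitonProfile A) z = 1 / 4 - A / 3 := by
  rw [iteratedDeriv_two_solitonProfile, solitonProfile]
  ring

theorem solitonProfile_reduced_equation (A z : ℝ) :
    (1 - 2 / 3 * A) * iteratedDeriv 2 (solitonProfile A) z =
      -(A / 6 * iteratedDeriv 4 (solitonProfile A) z)
        + iteratedDeriv 2 (fun z => solitonProfile A z ^ 2) z := by
  have hφ : ContDiff ℝ 2 (solitonProfile A) := contDiff_solitonProfile A
  have hφ'' : ContDiff ℝ 2 (iteratedDeriv 2 (solitonProfile A)) := by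
    rw [iteratedDeriv_eq_iterate]
    exact (contDiff_solitonProfile A).iterate_deriv' 2 2
  have h := congrArg (iteratedDeriv 2 · z) (funext (solitonProfile_first_integral A))
  rw [iteratedDeriv_fun_add, iteratedDeriv_fun_sub, iteratedDeriv_const_mul_field,
    iteratedDeriv_const_mul_field, iteratedDeriv_iteratedDeriv, iteratedDeriv_const] at h
  · norm_num at h
    linarith
  all_goals fun_prop

theorem solitary_wave_solution_general (A c ξ₀ : ℝ) (hA : 0 < A)
    (hc : c^2 = 1 - (2/3) * A)
    (u : ℝ → ℝ → ℝ)
    (hu : ∀ x t, u x t =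
      1/2 - A * (1 / Real.cosh (Real.sqrt (A/6) * (x + c*t - ξ₀)))^2) :
    ∀ x t, iteratedDeriv 2 (fun s => u x s) t =
      - iteratedDeriv 4 (fun y => u y t) x
      + iteratedDeriv 2 (fun y => (u y t)^2) x := by
  intro x t
  set k := Real.sqrt (A / 6)
  have hk : k ^ 2 = A / 6 := Real.sq_sqrt (by positivity)
  have hu_t : ∀ s, u x s = solitonProfile A (k * c * s + (k * x - k * ξ₀)) := by
    intro s; rw [hu, solitonProfile]; ring_nf
  have hu_x : ∀ y, u y t = solitonProfile A (k * y + (k * c * t - k * ξ₀)) := by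
    intro y; rw [hu, solitonProfile]; ring_nf
  simp only [hu_t, hu_x]
  rw [iteratedDeriv_comp_mul_add (n := 2) (contDiff_solitonProfile A),
    iteratedDeriv_comp_mul_add (n := 4) (contDiff_solitonProfile A),
    iteratedDeriv_comp_mul_add (n := 2) (f := fun z => solitonProfile A z ^ 2)
      ((contDiff_solitonProfile A).pow 2),
    show k * c * t + (k * x - k * ξ₀) = k * x + (k * c * t - k * ξ₀) by ring]
  set z := k * x + (k * c * t - k * ξ₀)
  linear_combination k ^ 2 * solitonProfile_reduced_equation A z
    + k ^ 2 * iteratedDeriv 2 (solitonProfile A) z * hc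
    + k ^ 2 * iteratedDeriv 4 (solitonProfile A) z * hk

/-- the traveling wave
`u(x,t) = 1/2 − A·sech²(√(A/6)(x + ct − ξ₀))`, with `c² = 1 − (2/3)A`,
is an exact solution of `u_tt = −u_xxxx + (u²)_xx`. -/
theorem solitary_wave_solution (A c ξ₀ : ℝ) (hA : 0 < A) (hA' : A < 3/2)
    (hc : c^2 = 1 - (2/3) * A)
    (u : ℝ → ℝ → ℝ)
    (hu : ∀ x t, u x t =
      1/2 - A * (1 / Real.cosh (Real.sqrt (A/6) * (x + c*t - ξ₀)))^2) :
    ∀ x t, iteratedDeriv 2 (fun s => u x s) t =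
      - iteratedDeriv 4 (fun y => u y t) x
      + iteratedDeriv 2 (fun y => (u y t)^2) x :=
  solitary_wave_solution_general A c ξ₀ hA hc u hu
end
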